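/- arXiv:1211.4999 — 2 statements merged into one kernel-verified Lean document; each statement's English description precedes it below -/
import Mathlib

section
/- For every nonempty set M ⊆ C and every k ∈ {1,…,m}, p_M^{(k)} = ∑_{j∈M} ∑_{A⊆C, |(M∖A)∪{j}|=k} (−1)^{|{j}∖A|} · q_j(A∖{j}) · φ(A). -/
/-!
Almost surely the lifetimes are pairwise distinct. Then, writing `B` for the set of components
that outlive component `j`, the system fails at `T j` exactly when `φ (B ∪ {j}) = 1` and
`φ B = 0`, and `T j` is the `k`-th failure in `M` exactly when `j ∈ M` and `|M \ B| = k`.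
Since `q_j(B)` is the probability that the survivors of `j` are exactly `B`, the signature
coordinate is the sum of `q_j(B)` over these pairs `(j, B)`. Writing the indicator of
`φ (B ∪ {j}) = 1 ∧ φ B = 0` as `φ (B ∪ {j}) - φ B` and putting `A = B ∪ {j}` or `A = B`
turns this sum into the signed one.
-/

open MeasureTheory Finset

/-- Lifetime of the (sub)system on component set `D` with structure function `χ`
(the maximum over the sets `A ⊆ D` with `χ A = 1` of `min_{i ∈ A} T i`). -/
noncomputable def sysLifeOn {Ω : Type*} {n : ℕ} (T : Fin n → Ω → ℝ)
    (D : Finset (Fin n)) (χ : Finset (Fin n) → ℝ) (ω : Ω) : ℝ :=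
  if h : (D.powerset.filter fun A => χ A = 1).Nonempty then
    (D.powerset.filter fun A => χ A = 1).sup' h
      (fun A => if hA : A.Nonempty then A.inf' hA fun i => T i ω else 0)
  else 0

/-- The `k`-th order statistic of the lifetimes `(T i)_{i ∈ M}`. -/
noncomputable def orderStat {Ω : Type*} {n : ℕ} (T : Fin n → Ω → ℝ)
    (M : Finset (Fin n)) (k : ℕ) (ω : Ω) : ℝ :=
  ((M.val.map fun i => T i ω).sort (· ≤ ·)).getD (k - 1) 0

/-- The relative quality function `q_j(A) = Pr(max_{i ∈ C∖A} T_i = T_j < min_{i ∈ A} T_i)`. -/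
noncomputable def relQual {Ω : Type*} [MeasurableSpace Ω] {n : ℕ} (μ : Measure Ω)
    (T : Fin n → Ω → ℝ) (j : Fin n) (A : Finset (Fin n)) : ℝ :=
  (μ {ω | (∀ i ∉ A, T i ω ≤ T j ω) ∧ ∀ i ∈ A, T j ω < T i ω}).toReal

lemma card_filter_le_orderEmbOfFin {α : Type*} [LinearOrder α] (s : Finset α) {k : ℕ}
    (h : #s = k) (i : Fin k) : #(s.filter (· ≤ s.orderEmbOfFin h i)) = i + 1 := by
  have hs := s.map_orderEmbOfFin_univ h
  generalize s.orderEmbOfFin h = e at hs ⊢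
  subst hs
  rw [filter_map, card_map, ← Fin.card_Iic]
  congr 1
  ext
  simp

section OrderStatistic

variable {Ω : Type*} {n : ℕ} {T : Fin n → Ω → ℝ} {M : Finset (Fin n)} {k : ℕ} {ω : Ω}

lemma orderStat_eq_orderEmbOfFin (hinj : Function.Injective fun i => T i ω)
    (hk1 : 1 ≤ k) (hkm : k ≤ #M) :
    orderStat T M k ω =
      (M.map ⟨_, hinj⟩).orderEmbOfFin (card_map _) ⟨k - 1, by omega⟩ := by
  rw [orderEmbOfFin_apply, orderStat, List.getD_eq_getElem]
  rfl

lemma exists_orderStat_eq (hinj : Function.Injective fun i => T i ω)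
    (hk1 : 1 ≤ k) (hkm : k ≤ #M) : ∃ j ∈ M, orderStat T M k ω = T j ω := by
  obtain ⟨j, hj, hjT⟩ :=
    mem_map.mp (orderEmbOfFin_mem (M.map ⟨_, hinj⟩) (card_map _) ⟨k - 1, by omega⟩)
  exact ⟨j, hj, (orderStat_eq_orderEmbOfFin hinj hk1 hkm).trans hjT.symm⟩

lemma orderStat_eq_iff (hinj : Function.Injective fun i => T i ω)
    (hk1 : 1 ≤ k) (hkm : k ≤ #M) {j : Fin n} (hj : j ∈ M) :
    orderStat T M k ω = T j ω ↔ #(M.filter fun i => T i ω ≤ T j ω) = k := by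
  set s := M.map ⟨_, hinj⟩
  have hjs : T j ω ∈ s := mem_map_of_mem _ hj
  rw [← mem_coe, ← s.range_orderEmbOfFin (card_map _), Set.mem_range] at hjs
  obtain ⟨m, hm⟩ := hjs
  have hrank : #(M.filter fun i => T i ω ≤ T j ω) = m + 1 := by
    rw [← card_filter_le_orderEmbOfFin s (card_map _) m, hm, filter_map, card_map]
    rfl
  rw [hrank, orderStat_eq_orderEmbOfFin hinj hk1 hkm, ← hm,
    (s.orderEmbOfFin _).injective.eq_iff, Fin.ext_iff, Fin.val_mk]
  omega

end OrderStatistic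

section SystemLifetime

variable {Ω : Type*} {n : ℕ} {T : Fin n → Ω → ℝ} {φ : Finset (Fin n) → ℝ} {ω : Ω}

lemma apply_filter_eq_one_iff (hφ01 : ∀ A, φ A = 0 ∨ φ A = 1)
    (hφmono : ∀ A B : Finset (Fin n), A ⊆ B → φ A ≤ φ B) (P : Fin n → Prop) [DecidablePred P] :
    φ (univ.filter P) = 1 ↔ ∃ A, φ A = 1 ∧ ∀ i ∈ A, P i := by
  refine ⟨fun h => ⟨_, h, fun i hi => (mem_filter.mp hi).2⟩, fun ⟨A, hA, hAP⟩ => ?_⟩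
  have hle : φ A ≤ φ (univ.filter P) := hφmono _ _ fun i hi => mem_filter.mpr ⟨mem_univ i, hAP i hi⟩
  rcases hφ01 (univ.filter P) with h | h <;> linarith

lemma le_sysLifeOn_iff (hφ01 : ∀ A, φ A = 0 ∨ φ A = 1)
    (hφmono : ∀ A B : Finset (Fin n), A ⊆ B → φ A ≤ φ B)
    (hφempty : φ ∅ = 0) (hφfull : φ univ = 1) (t : ℝ) :
    t ≤ sysLifeOn T univ φ ω ↔ φ (univ.filter fun i => t ≤ T i ω) = 1 := by
  have hne : (univ.powerset.filter fun A => φ A = 1).Nonempty := ⟨univ, by simp [hφfull]⟩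
  rw [sysLifeOn, dif_pos hne, le_sup'_iff, apply_filter_eq_one_iff hφ01 hφmono]
  refine exists_congr fun A => ?_
  simp only [mem_filter, mem_powerset, subset_univ, true_and, and_congr_right_iff]
  intro hφA
  have hA : A.Nonempty := nonempty_iff_ne_empty.mpr (by rintro rfl; simp [hφempty] at hφA)
  rw [dif_pos hA, le_inf'_iff]

lemma lt_sysLifeOn_iff (hφ01 : ∀ A, φ A = 0 ∨ φ A = 1)
    (hφmono : ∀ A B : Finset (Fin n), A ⊆ B → φ A ≤ φ B)
    (hφempty : φ ∅ = 0) (hφfull : φ univ = 1) (t : ℝ) :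
    t < sysLifeOn T univ φ ω ↔ φ (univ.filter fun i => t < T i ω) = 1 := by
  have hne : (univ.powerset.filter fun A => φ A = 1).Nonempty := ⟨univ, by simp [hφfull]⟩
  rw [sysLifeOn, dif_pos hne, lt_sup'_iff, apply_filter_eq_one_iff hφ01 hφmono]
  refine exists_congr fun A => ?_
  simp only [mem_filter, mem_powerset, subset_univ, true_and, and_congr_right_iff]
  intro hφA
  have hA : A.Nonempty := nonempty_iff_ne_empty.mpr (by rintro rfl; simp [hφempty] at hφA)
  rw [dif_pos hA, lt_inf'_iff]

lemma sysLifeOn_eq_iff (hφ01 : ∀ A, φ A = 0 ∨ φ A = 1)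
    (hφmono : ∀ A B : Finset (Fin n), A ⊆ B → φ A ≤ φ B)
    (hφempty : φ ∅ = 0) (hφfull : φ univ = 1) (t : ℝ) :
    sysLifeOn T univ φ ω = t ↔
      φ (univ.filter fun i => t ≤ T i ω) = 1 ∧ φ (univ.filter fun i => t < T i ω) = 0 := by
  have h01 : φ (univ.filter fun i => t < T i ω) = 0 ↔ ¬ φ (univ.filter fun i => t < T i ω) = 1 :=
    ⟨fun h => by simp [h], (hφ01 _).resolve_right⟩
  rw [← le_sysLifeOn_iff hφ01 hφmono hφempty hφfull, h01,
    ← lt_sysLifeOn_iff hφ01 hφmono hφempty hφfull, not_lt]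
  exact ⟨fun h => ⟨h.ge, h.le⟩, fun h => le_antisymm h.2 h.1⟩

end SystemLifetime

section Survivors

variable {Ω : Type*} {n : ℕ} {T : Fin n → Ω → ℝ} {ω : Ω}

/-- The components still working at the failure time of component `j`. -/
noncomputable def survivors (T : Fin n → Ω → ℝ) (j : Fin n) (ω : Ω) : Finset (Fin n) :=
  univ.filter fun i => T j ω < T i ω

lemma notMem_survivors (j : Fin n) : j ∉ survivors T j ω := by
  simp [survivors]

lemma insert_survivors (hinj : Function.Injective fun i => T i ω) (j : Fin n) :
    insert j (survivors T j ω) = univ.filter fun i => T j ω ≤ T i ω := by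
  ext i
  simp only [survivors, mem_insert, mem_filter, mem_univ, true_and, le_iff_lt_or_eq]
  exact or_comm.trans (or_congr_right ⟨fun h => congrArg (T · ω) h.symm, fun h => (hinj h).symm⟩)

lemma sdiff_survivors (M : Finset (Fin n)) (j : Fin n) :
    M \ survivors T j ω = M.filter fun i => T i ω ≤ T j ω := by
  ext i
  simp [survivors]

lemma measurableSet_survivors_eq [MeasurableSpace Ω] (hTmeas : ∀ i, Measurable (T i))
    (j : Fin n) (B : Finset (Fin n)) : MeasurableSet {ω | survivors T j ω = B} := by
  have hset : {ω | survivors T j ω = B} = ⋂ i, {ω | T j ω < T i ω ↔ i ∈ B} := by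
    ext ω
    simp [survivors, Finset.ext_iff]
  rw [hset]
  exact .iInter fun i => (measurableSet_lt (hTmeas j) (hTmeas i)).iff (.const _)

lemma relQual_eq_measure_survivors_eq [MeasurableSpace Ω] (μ : Measure Ω) (j : Fin n)
    (B : Finset (Fin n)) : relQual μ T j B = (μ {ω | survivors T j ω = B}).toReal := by
  rw [relQual]
  congr 2
  ext ω
  simp only [survivors, Set.mem_ofPred_eq, Finset.ext_iff, mem_filter, mem_univ, true_and]
  exact ⟨fun h i => ⟨fun hi => by_contra fun hiB => (h.1 i hiB).not_gt hi, h.2 i⟩,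
    fun h => ⟨fun i hiB => not_lt.mp fun hi => hiB ((h i).mp hi), fun i => (h i).mpr⟩⟩

end Survivors

/-- When the survivors of `j` are exactly such a `B` (and lifetimes are distinct), the failure
of `j` is both the system failure and the `k`-th failure in `M`. -/
noncomputable def criticalSets {n : ℕ} (φ : Finset (Fin n) → ℝ) (M : Finset (Fin n)) (k : ℕ)
    (j : Fin n) : Finset (Finset (Fin n)) :=
  (univ.erase j).powerset.filter fun B => #(M \ B) = k ∧ φ (insert j B) = 1 ∧ φ B = 0

section Pointwise

variable {Ω : Type*} {n : ℕ} {T : Fin n → Ω → ℝ} {φ : Finset (Fin n) → ℝ}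
  {M : Finset (Fin n)} {k : ℕ} {ω : Ω}

lemma survivors_mem_criticalSets_iff (hφ01 : ∀ A, φ A = 0 ∨ φ A = 1)
    (hφmono : ∀ A B : Finset (Fin n), A ⊆ B → φ A ≤ φ B)
    (hφempty : φ ∅ = 0) (hφfull : φ univ = 1) (hk1 : 1 ≤ k) (hkm : k ≤ #M)
    (hinj : Function.Injective fun i => T i ω) {j : Fin n} (hj : j ∈ M) :
    survivors T j ω ∈ criticalSets φ M k j ↔
      sysLifeOn T univ φ ω = T j ω ∧ orderStat T M k ω = T j ω := by
  rw [sysLifeOn_eq_iff hφ01 hφmono hφempty hφfull, orderStat_eq_iff hinj hk1 hkm hj,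
    ← insert_survivors hinj, ← sdiff_survivors, criticalSets, mem_filter, mem_powerset,
    subset_erase]
  simp only [subset_univ, notMem_survivors, not_false_eq_true, and_self, true_and]
  tauto

lemma sysLifeOn_eq_orderStat_iff (hφ01 : ∀ A, φ A = 0 ∨ φ A = 1)
    (hφmono : ∀ A B : Finset (Fin n), A ⊆ B → φ A ≤ φ B)
    (hφempty : φ ∅ = 0) (hφfull : φ univ = 1) (hk1 : 1 ≤ k) (hkm : k ≤ #M)
    (hinj : Function.Injective fun i => T i ω) :
    sysLifeOn T univ φ ω = orderStat T M k ω ↔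
      ∃ j ∈ M, survivors T j ω ∈ criticalSets φ M k j := by
  obtain ⟨j₀, hj₀, hord⟩ := exists_orderStat_eq hinj hk1 hkm
  refine ⟨fun h => ⟨j₀, hj₀, ?_⟩, fun ⟨j, hj, hcrit⟩ => ?_⟩
  · exact (survivors_mem_criticalSets_iff hφ01 hφmono hφempty hφfull hk1 hkm hinj hj₀).mpr
      ⟨h.trans hord, hord⟩
  · obtain ⟨hsys, hord⟩ :=
      (survivors_mem_criticalSets_iff hφ01 hφmono hφempty hφfull hk1 hkm hinj hj).mp hcrit
    rw [hsys, hord]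

end Pointwise

section Measure

variable {Ω : Type*} [MeasurableSpace Ω] {μ : Measure Ω} {n : ℕ} {T : Fin n → Ω → ℝ}

lemma ae_injective_of_measure_eq_zero
    (hties : ∀ i j : Fin n, i ≠ j → μ {ω | T i ω = T j ω} = 0) :
    ∀ᵐ ω ∂μ, Function.Injective fun i => T i ω := by
  have hne : ∀ᵐ ω ∂μ, ∀ i j : Fin n, i ≠ j → T i ω ≠ T j ω := by
    refine ae_all_iff.mpr fun i => ae_all_iff.mpr fun j => ?_
    by_cases hij : i = j
    · exact .of_forall fun _ h => absurd hij h
    · filter_upwards [measure_eq_zero_iff_ae_notMem.mp (hties i j hij)] with ω hω _ using hω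
  filter_upwards [hne] with ω hω i j hij
  by_contra h
  exact hω i j h hij

lemma measure_sysLifeOn_eq_orderStat [IsFiniteMeasure μ] (hTmeas : ∀ i, Measurable (T i))
    (hties : ∀ i j : Fin n, i ≠ j → μ {ω | T i ω = T j ω} = 0)
    {φ : Finset (Fin n) → ℝ} (hφ01 : ∀ A, φ A = 0 ∨ φ A = 1)
    (hφmono : ∀ A B : Finset (Fin n), A ⊆ B → φ A ≤ φ B)
    (hφempty : φ ∅ = 0) (hφfull : φ univ = 1)
    {M : Finset (Fin n)} {k : ℕ} (hk1 : 1 ≤ k) (hkm : k ≤ #M) :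
    μ {ω | sysLifeOn T univ φ ω = orderStat T M k ω} =
      ∑ j ∈ M, ∑ B ∈ criticalSets φ M k j, μ {ω | survivors T j ω = B} := by
  have hinj := ae_injective_of_measure_eq_zero hties
  set E : Fin n → Set Ω := fun j => survivors T j ⁻¹' ↑(criticalSets φ M k j)
  have hE : ∀ j, MeasurableSet (E j) := fun j => by
    simp only [E, ← Finset.set_biUnion_preimage_singleton]
    exact .biUnion (countable_toSet _) fun B _ => measurableSet_survivors_eq hTmeas j B
  have hunion : {ω | sysLifeOn T univ φ ω = orderStat T M k ω} =ᵐ[μ] ⋃ j ∈ M, E j := by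
    refine Filter.eventuallyEq_set.mpr ?_
    filter_upwards [hinj] with ω hω
    simp only [Set.mem_iUnion, exists_prop, E, Set.mem_preimage, mem_coe]
    exact sysLifeOn_eq_orderStat_iff hφ01 hφmono hφempty hφfull hk1 hkm hω
  have hdisj : (M : Set (Fin n)).Pairwise fun i j => AEDisjoint μ (E i) (E j) := by
    intro i hi j hj hij
    refine measure_eq_zero_iff_ae_notMem.mpr ?_
    filter_upwards [hinj] with ω hω ⟨hωi, hωj⟩
    have hi' := (survivors_mem_criticalSets_iff hφ01 hφmono hφempty hφfull hk1 hkm hω hi).mp hωi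
    have hj' := (survivors_mem_criticalSets_iff hφ01 hφmono hφempty hφfull hk1 hkm hω hj).mp hωj
    exact hij (hω (hi'.2.symm.trans hj'.2))
  rw [measure_congr hunion, measure_biUnion_finset₀ hdisj fun j _ => (hE j).nullMeasurableSet]
  exact sum_congr rfl fun j _ =>
    (sum_measure_preimage_singleton _ fun B _ => measurableSet_survivors_eq hTmeas j B).symm

end Measure

lemma sum_criticalSets_eq {n : ℕ} {φ : Finset (Fin n) → ℝ} (hφ01 : ∀ A, φ A = 0 ∨ φ A = 1)
    (hφmono : ∀ A B : Finset (Fin n), A ⊆ B → φ A ≤ φ B) {M : Finset (Fin n)} {k : ℕ}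
    {j : Fin n} (hj : j ∈ M) (q : Finset (Fin n) → ℝ) :
    ∑ B ∈ criticalSets φ M k j, q B =
      ∑ A ∈ univ.powerset.filter (fun A => #((M \ A) ∪ {j}) = k),
        (-1 : ℝ) ^ #({j} \ A) * q (A \ {j}) * φ A := by
  rw [criticalSets, sum_filter, sum_filter]
  conv_rhs => rw [← insert_erase (mem_univ j), sum_powerset_insert (notMem_erase j univ),
    ← sum_add_distrib]
  refine sum_congr rfl fun B hB => ?_
  have hjB : j ∉ B := fun h => notMem_erase j univ (mem_powerset.mp hB h)
  have hsdiff : (M \ B) ∪ {j} = M \ B :=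
    union_eq_left.mpr (singleton_subset_iff.mpr (mem_sdiff.mpr ⟨hj, hjB⟩))
  have hsdiff' : (M \ insert j B) ∪ {j} = M \ B := by
    rw [← hsdiff]
    ext i
    by_cases hij : i = j <;> simp [hij]
  rw [hsdiff, hsdiff', sdiff_eq_self_of_disjoint (disjoint_singleton_left.mpr hjB),
    sdiff_eq_empty_iff_subset.mpr (singleton_subset_iff.mpr (mem_insert_self j B)),
    sdiff_singleton_eq_erase, sdiff_singleton_eq_erase, erase_eq_of_notMem hjB,
    erase_insert hjB]
  by_cases hk : #(M \ B) = k
  · have hmono := hφmono B (insert j B) (subset_insert j B)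
    rcases hφ01 B with h | h <;> rcases hφ01 (insert j B) with h' | h' <;>
      first | linarith | simp [hk, h, h']
  · simp [hk]

theorem stmt_3_general {Ω : Type*} [MeasurableSpace Ω] (μ : Measure Ω) [IsProbabilityMeasure μ]
    {n : ℕ} (T : Fin n → Ω → ℝ) (hTmeas : ∀ i, Measurable (T i))
    (hties : ∀ i j : Fin n, i ≠ j → μ {ω | T i ω = T j ω} = 0)
    (φ : Finset (Fin n) → ℝ)
    (hφ01 : ∀ A, φ A = 0 ∨ φ A = 1)
    (hφmono : ∀ A B : Finset (Fin n), A ⊆ B → φ A ≤ φ B)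
    (hφempty : φ ∅ = 0) (hφfull : φ Finset.univ = 1)
    (M : Finset (Fin n)) (k : ℕ) (hk1 : 1 ≤ k) (hkm : k ≤ M.card) :
    (μ {ω | sysLifeOn T Finset.univ φ ω = orderStat T M k ω}).toReal =
      ∑ j ∈ M, ∑ A ∈ (Finset.univ : Finset (Fin n)).powerset.filter
          (fun A => ((M \ A) ∪ {j}).card = k),
        (-1 : ℝ) ^ (({j} \ A : Finset (Fin n)).card) * relQual μ T j (A \ {j}) * φ A := by
  rw [measure_sysLifeOn_eq_orderStat hTmeas hties hφ01 hφmono hφempty hφfull hk1 hkm,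
    ENNReal.toReal_sum fun _ _ => ENNReal.sum_ne_top.mpr fun _ _ => measure_ne_top _ _]
  refine sum_congr rfl fun j hj => ?_
  rw [ENNReal.toReal_sum fun _ _ => measure_ne_top _ _,
    ← sum_criticalSets_eq hφ01 hφmono hj (relQual μ T j)]
  exact sum_congr rfl fun B _ => (relQual_eq_measure_survivors_eq μ j B).symm

theorem stmt_3 {Ω : Type*} [MeasurableSpace Ω] (μ : Measure Ω) [IsProbabilityMeasure μ]
    {n : ℕ} (T : Fin n → Ω → ℝ) (hTmeas : ∀ i, Measurable (T i))
    (hTnonneg : ∀ i ω, 0 ≤ T i ω)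
    (hties : ∀ i j : Fin n, i ≠ j → μ {ω | T i ω = T j ω} = 0)
    (φ : Finset (Fin n) → ℝ)
    (hφ01 : ∀ A, φ A = 0 ∨ φ A = 1)
    (hφmono : ∀ A B : Finset (Fin n), A ⊆ B → φ A ≤ φ B)
    (hφempty : φ ∅ = 0) (hφfull : φ Finset.univ = 1)
    (M : Finset (Fin n)) (hM : M.Nonempty) (k : ℕ) (hk1 : 1 ≤ k) (hkm : k ≤ M.card) :
    (μ {ω | sysLifeOn T Finset.univ φ ω = orderStat T M k ω}).toReal =
      ∑ j ∈ M, ∑ A ∈ (Finset.univ : Finset (Fin n)).powerset.filter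
          (fun A => ((M \ A) ∪ {j}).card = k),
        (-1 : ℝ) ^ (({j} \ A : Finset (Fin n)).card) * relQual μ T j (A \ {j}) * φ A :=
  stmt_3_general μ T hTmeas hties φ hφ01 hφmono hφempty hφfull M k hk1 hkm
end

section
/- For every k ∈ {1,…,n}, the k-th coordinate of the probability signature satisfies p_k = ∑_{A⊆C} d(A)·Pr(T_{k:n} = min_{i∈A} T_i), where T_{k:n} is the k-th order statistic of all n component lifetimes. -/
/-!
Off a null set the lifetimes are pairwise distinct, so up to a null set `Ω` is the disjoint union
of the events `sortedEvent T σ` on which `σ` lists the components in their order of failure. On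
such an event every event of the statement is decided by `σ` alone: if `U` is the set of components
failing no earlier than the `k`-th failure `σ m`, then the system fails at `T_{k:n}` iff `φ U = 1`
and `φ (U \ {σ m}) = 0`, while `min_{i ∈ A} T_i = T_{k:n}` iff `σ m ∈ A ⊆ U`. Möbius inversion
`φ W = ∑_{B ⊆ W} d B` turns `∑_{σ m ∈ A ⊆ U} d A` into `φ U - φ (U \ {σ m})`, which for a monotone
`0/1`-valued `φ` is the indicator of the first event.
-/

open MeasureTheory Finset

/-- `min_{i ∈ A} T i` (with junk value `0` when `A = ∅`). -/
noncomputable def minOnLife {Ω : Type*} {n : ℕ} (T : Fin n → Ω → ℝ)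
    (A : Finset (Fin n)) (ω : Ω) : ℝ :=
  if h : A.Nonempty then A.inf' h fun i => T i ω else 0

/-- The signed domination function `d(A) = ∑_{B ⊆ A} (-1)^{|A|-|B|} φ(B)`. -/
noncomputable def signedDom {n : ℕ} (φ : Finset (Fin n) → ℝ) (A : Finset (Fin n)) : ℝ :=
  ∑ B ∈ A.powerset, (-1 : ℝ) ^ (A.card - B.card) * φ B

lemma sum_Icc_neg_one_pow_card_sub {α R : Type*} [DecidableEq α] [CommRing R]
    {C W : Finset α} (h : C ⊆ W) :
    ∑ B ∈ Icc C W, (-1 : R) ^ (#B - #C) = if C = W then 1 else 0 := by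
  have hinj : Set.InjOn (C ∪ ·) ((W \ C).powerset : Set (Finset α)) := by
    intro D hD E hE hDE
    simp only [coe_powerset, Set.mem_preimage, Set.mem_powerset_iff, coe_subset] at hD hE
    rw [← union_sdiff_cancel_left (disjoint_of_subset_right hD disjoint_sdiff),
      ← union_sdiff_cancel_left (disjoint_of_subset_right hE disjoint_sdiff)]
    exact congrArg (· \ C) hDE
  rw [Icc_eq_image_powerset h, sum_image hinj]
  have hcard : ∀ D ∈ (W \ C).powerset, (-1 : R) ^ (#(C ∪ D) - #C) = (-1 : R) ^ #D := by
    intro D hD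
    rw [card_union_of_disjoint (disjoint_of_subset_right (mem_powerset.1 hD) disjoint_sdiff),
      Nat.add_sub_cancel_left]
  rw [sum_congr rfl hcard]
  have := congrArg (Int.cast : ℤ → R) (sum_powerset_neg_one_pow_card (x := W \ C))
  push_cast at this
  rw [this]
  exact if_congr (sdiff_eq_empty_iff_subset.trans ⟨subset_antisymm h, fun hCW => hCW ▸ subset_rfl⟩)
    rfl rfl

section SignedDomination

variable {n : ℕ} (φ : Finset (Fin n) → ℝ)

lemma signedDom_empty : signedDom φ ∅ = φ ∅ := by
  simp [signedDom]

lemma sum_powerset_signedDom (W : Finset (Fin n)) : ∑ B ∈ W.powerset, signedDom φ B = φ W := by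
  classical
  simp only [signedDom]
  rw [sum_comm' (t' := W.powerset) (s' := fun C => Icc C W) (by
    intro B C
    simp only [mem_powerset, mem_Icc]
    exact ⟨fun h => ⟨⟨h.2, h.1⟩, h.2.trans h.1⟩, fun h => ⟨h.1.2, h.1.1⟩⟩)]
  simp_rw [← sum_mul]
  rw [sum_congr rfl fun C hC => by rw [sum_Icc_neg_one_pow_card_sub (mem_powerset.1 hC)]]
  simp [ite_mul]

lemma sum_signedDom_of_mem_of_subset (U : Finset (Fin n)) (j : Fin n) :
    ∑ A ∈ (univ : Finset (Fin n)).powerset with j ∈ A ∧ A ⊆ U, signedDom φ A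
      = φ U - φ (U.erase j) := by
  classical
  have hsplit := sum_filter_add_sum_filter_not U.powerset (j ∈ ·) (signedDom φ)
  have hmem : {A ∈ (univ : Finset (Fin n)).powerset | j ∈ A ∧ A ⊆ U} =
      {A ∈ U.powerset | j ∈ A} := by
    ext A; simp [and_comm]
  have hnot : {A ∈ U.powerset | j ∉ A} = (U.erase j).powerset := by
    ext A; simp [subset_erase]
  rw [hnot, sum_powerset_signedDom, sum_powerset_signedDom] at hsplit
  rw [hmem]
  linarith

end SignedDomination

section Lifetimes

variable {Ω : Type*} {n : ℕ} {T : Fin n → Ω → ℝ} {ω : Ω} {x : ℝ}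

lemma le_minOnLife_iff {A : Finset (Fin n)} (hA : A.Nonempty) :
    x ≤ minOnLife T A ω ↔ ∀ i ∈ A, x ≤ T i ω := by
  rw [minOnLife, dif_pos hA, le_inf'_iff]

lemma lt_minOnLife_iff {A : Finset (Fin n)} (hA : A.Nonempty) :
    x < minOnLife T A ω ↔ ∀ i ∈ A, x < T i ω := by
  rw [minOnLife, dif_pos hA, lt_inf'_iff]

lemma eq_minOnLife_iff (hT : Function.Injective (T · ω)) {A : Finset (Fin n)} (hA : A.Nonempty)
    (j : Fin n) : T j ω = minOnLife T A ω ↔ j ∈ A ∧ ∀ i ∈ A, T j ω ≤ T i ω := by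
  rw [le_antisymm_iff, le_minOnLife_iff hA, minOnLife, dif_pos hA, inf'_le_iff]
  refine ⟨fun ⟨hle, i, hi, hij⟩ => ⟨?_, hle⟩, fun ⟨hj, hle⟩ => ⟨hle, j, hj, le_rfl⟩⟩
  rwa [hT (le_antisymm hij (hle i hi))] at hi

variable {D : Finset (Fin n)} {χ : Finset (Fin n) → ℝ}

lemma sysLifeOn_eq_sup' (h : {A ∈ D.powerset | χ A = 1}.Nonempty) :
    sysLifeOn T D χ ω = {A ∈ D.powerset | χ A = 1}.sup' h (minOnLife T · ω) := by
  rw [sysLifeOn, dif_pos h]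
  rfl

lemma le_sysLifeOn_iff_s6 (hD : χ D = 1) (hχ : χ ∅ ≠ 1) :
    x ≤ sysLifeOn T D χ ω ↔ ∃ A ⊆ D, χ A = 1 ∧ ∀ i ∈ A, x ≤ T i ω := by
  have hne : {A ∈ D.powerset | χ A = 1}.Nonempty := ⟨D, mem_filter.2 ⟨mem_powerset_self D, hD⟩⟩
  rw [sysLifeOn_eq_sup' hne, le_sup'_iff]
  simp only [mem_filter, mem_powerset, and_assoc]
  refine exists_congr fun A => and_congr_right fun _ => and_congr_right fun hA => ?_
  exact le_minOnLife_iff (nonempty_iff_ne_empty.2 (by rintro rfl; exact hχ hA))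

lemma lt_sysLifeOn_iff_s6 (hD : χ D = 1) (hχ : χ ∅ ≠ 1) :
    x < sysLifeOn T D χ ω ↔ ∃ A ⊆ D, χ A = 1 ∧ ∀ i ∈ A, x < T i ω := by
  have hne : {A ∈ D.powerset | χ A = 1}.Nonempty := ⟨D, mem_filter.2 ⟨mem_powerset_self D, hD⟩⟩
  rw [sysLifeOn_eq_sup' hne, lt_sup'_iff]
  simp only [mem_filter, mem_powerset, and_assoc]
  refine exists_congr fun A => and_congr_right fun _ => and_congr_right fun hA => ?_
  exact lt_minOnLife_iff (nonempty_iff_ne_empty.2 (by rintro rfl; exact hχ hA))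

end Lifetimes

section StructureFunction

variable {n : ℕ} {φ : Finset (Fin n) → ℝ}

lemma exists_subset_eq_one_iff (hφ01 : ∀ A, φ A = 0 ∨ φ A = 1)
    (hφmono : ∀ A B : Finset (Fin n), A ⊆ B → φ A ≤ φ B) (S : Finset (Fin n)) :
    (∃ A ⊆ S, φ A = 1) ↔ φ S = 1 := by
  refine ⟨fun ⟨A, hAS, hA⟩ => (hφ01 S).resolve_left fun hS => ?_, fun hS => ⟨S, subset_rfl, hS⟩⟩
  linarith [hφmono A S hAS]

lemma sysLifeOn_univ_eq_iff {Ω : Type*} {T : Fin n → Ω → ℝ} {ω : Ω}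
    (hφ01 : ∀ A, φ A = 0 ∨ φ A = 1) (hφmono : ∀ A B : Finset (Fin n), A ⊆ B → φ A ≤ φ B)
    (hφempty : φ ∅ = 0) (hφfull : φ univ = 1) (x : ℝ) :
    sysLifeOn T univ φ ω = x ↔ φ {i | x ≤ T i ω} = 1 ∧ φ {i | x < T i ω} = 0 := by
  have hφ : φ ∅ ≠ 1 := by rw [hφempty]; exact zero_ne_one
  rw [eq_comm, eq_iff_le_not_lt, le_sysLifeOn_iff_s6 hφfull hφ, lt_sysLifeOn_iff_s6 hφfull hφ]
  have hsub (p : Fin n → Prop) [DecidablePred p] :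
      (∃ A ⊆ univ, φ A = 1 ∧ ∀ i ∈ A, p i) ↔ φ {i | p i} = 1 := by
    rw [← exists_subset_eq_one_iff hφ01 hφmono]
    simp only [subset_univ, true_and]
    exact exists_congr fun A => by rw [and_comm, subset_iff]; simp only [mem_filter_univ]
  rw [hsub, hsub]
  exact and_congr_right' ⟨(hφ01 _).resolve_right, fun h => by rw [h]; exact zero_ne_one⟩

lemma sub_eq_ite_of_subset (hφ01 : ∀ A, φ A = 0 ∨ φ A = 1)
    (hφmono : ∀ A B : Finset (Fin n), A ⊆ B → φ A ≤ φ B) {U V : Finset (Fin n)} (hVU : V ⊆ U) :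
    φ U - φ V = if φ U = 1 ∧ φ V = 0 then 1 else 0 := by
  have := hφmono V U hVU
  rcases hφ01 U with hU | hU <;> rcases hφ01 V with hV | hV <;> grind

end StructureFunction

section SortedEvent

variable {Ω : Type*} {n : ℕ}

def sortedEvent (T : Fin n → Ω → ℝ) (σ : Equiv.Perm (Fin n)) : Set Ω :=
  {ω | StrictMono fun m => T (σ m) ω}

variable {T : Fin n → Ω → ℝ} {σ : Equiv.Perm (Fin n)} {ω : Ω}

lemma measurableSet_sortedEvent [MeasurableSpace Ω] (hT : ∀ i, Measurable (T i))
    (σ : Equiv.Perm (Fin n)) : MeasurableSet (sortedEvent T σ) := by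
  simp only [sortedEvent, StrictMono, Set.ofPred_forall]
  exact .iInter fun _ => .iInter fun _ => .iInter fun _ => measurableSet_lt (hT _) (hT _)

lemma le_iff_le_of_mem_sortedEvent (hω : ω ∈ sortedEvent T σ) (m : Fin n) (i : Fin n) :
    T (σ m) ω ≤ T i ω ↔ m ≤ σ.symm i := by
  simpa using (hω : StrictMono _).le_iff_le (a := m) (b := σ.symm i)

lemma lt_iff_lt_of_mem_sortedEvent (hω : ω ∈ sortedEvent T σ) (m : Fin n) (i : Fin n) :
    T (σ m) ω < T i ω ↔ m < σ.symm i := by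
  simpa using (hω : StrictMono _).lt_iff_lt (a := m) (b := σ.symm i)

lemma injective_of_mem_sortedEvent (hω : ω ∈ sortedEvent T σ) : Function.Injective (T · ω) := by
  simpa [Function.comp_def] using (hω : StrictMono _).injective.comp σ.symm.injective

lemma exists_mem_sortedEvent (hω : Function.Injective (T · ω)) : ∃ σ, ω ∈ sortedEvent T σ :=
  ⟨Tuple.sort (T · ω),
    (Tuple.monotone_sort _).strictMono_of_injective (hω.comp (Equiv.injective _))⟩

open Function in
lemma pairwise_disjoint_sortedEvent (T : Fin n → Ω → ℝ) :
    Pairwise (Disjoint on sortedEvent T) := by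
  intro σ τ hστ
  refine Set.disjoint_left.2 fun ω hσ hτ => hστ ?_
  have h := Tuple.unique_monotone (f := (T · ω)) (hσ : StrictMono _).monotone
    (hτ : StrictMono _).monotone
  exact Equiv.ext fun m => injective_of_mem_sortedEvent hσ (congrFun h m)

lemma measure_compl_iUnion_sortedEvent [MeasurableSpace Ω] (μ : Measure Ω)
    (hties : ∀ i j : Fin n, i ≠ j → μ {ω | T i ω = T j ω} = 0) :
    μ (⋃ σ, sortedEvent T σ)ᶜ = 0 := by
  refine measure_mono_null (t := ⋃ (i) (j) (_ : i ≠ j), {ω | T i ω = T j ω}) ?_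
    (measure_iUnion_null fun i => measure_iUnion_null fun j => measure_iUnion_null (hties i j))
  intro ω hω
  by_contra hties
  simp only [Set.mem_iUnion, Set.mem_ofPred_eq, not_exists] at hties
  obtain ⟨σ, hσ⟩ := exists_mem_sortedEvent fun i j hij => by_contra fun hne => hties i j hne hij
  exact hω (Set.mem_iUnion.2 ⟨σ, hσ⟩)

lemma orderStat_univ_of_mem_sortedEvent (hω : ω ∈ sortedEvent T σ) (m : Fin n) :
    orderStat T univ (m + 1) ω = T (σ m) ω := by
  have hsort : Multiset.sort (univ.val.map (T · ω)) (· ≤ ·) = List.ofFn fun m => T (σ m) ω := by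
    rw [Fin.univ_val_map, Multiset.coe_sort]
    refine List.Perm.eq_of_pairwise' (List.pairwise_mergeSort' _ _)
      ((hω : StrictMono _).monotone.sortedLE_ofFn.pairwise) ?_
    exact (List.mergeSort_perm _ _).trans (σ.ofFn_comp_perm (T · ω)).symm
  rw [orderStat, hsort, Nat.add_sub_cancel, List.getD_eq_getElem _ _ (by simp), List.getElem_ofFn]

end SortedEvent

lemma measureReal_eq_sum_sortedEvent {Ω : Type*} [MeasurableSpace Ω] {n : ℕ} (μ : Measure Ω)
    [IsFiniteMeasure μ] {T : Fin n → Ω → ℝ} (hT : ∀ i, Measurable (T i))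
    (hties : ∀ i j : Fin n, i ≠ j → μ {ω | T i ω = T j ω} = 0) {s : Set Ω}
    (P : Equiv.Perm (Fin n) → Prop) [DecidablePred P]
    (hs : ∀ σ, ∀ ω ∈ sortedEvent T σ, ω ∈ s ↔ P σ) :
    μ.real s = ∑ σ, if P σ then μ.real (sortedEvent T σ) else 0 := by
  have hcover : s ∩ ⋃ σ, sortedEvent T σ = ⋃ σ ∈ ({σ | P σ} : Finset _), sortedEvent T σ := by
    ext ω
    simp only [Set.mem_inter_iff, Set.mem_iUnion, mem_filter_univ, exists_prop]
    constructor
    · rintro ⟨hωs, σ, hσ⟩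
      exact ⟨σ, (hs σ ω hσ).1 hωs, hσ⟩
    · rintro ⟨σ, hP, hσ⟩
      exact ⟨(hs σ ω hσ).2 hP, σ, hσ⟩
  rw [← sum_filter, measureReal_def,
    ← measure_inter_conull (measure_compl_iUnion_sortedEvent μ hties), ← measureReal_def, hcover, measureReal_biUnion_finset
      ((pairwise_disjoint_sortedEvent T).set_pairwise _) fun σ _ => measurableSet_sortedEvent hT σ]

theorem stmt_6_general {Ω : Type*} [MeasurableSpace Ω] (μ : Measure Ω) [IsProbabilityMeasure μ]
    {n : ℕ} (T : Fin n → Ω → ℝ) (hTmeas : ∀ i, Measurable (T i))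
    (hties : ∀ i j : Fin n, i ≠ j → μ {ω | T i ω = T j ω} = 0)
    (φ : Finset (Fin n) → ℝ)
    (hφ01 : ∀ A, φ A = 0 ∨ φ A = 1)
    (hφmono : ∀ A B : Finset (Fin n), A ⊆ B → φ A ≤ φ B)
    (hφempty : φ ∅ = 0) (hφfull : φ Finset.univ = 1)
    (k : ℕ) (hk1 : 1 ≤ k) (hkn : k ≤ n) :
    (μ {ω | sysLifeOn T Finset.univ φ ω = orderStat T Finset.univ k ω}).toReal =
      ∑ A ∈ (Finset.univ : Finset (Fin n)).powerset,
        signedDom φ A * (μ {ω | orderStat T Finset.univ k ω = minOnLife T A ω}).toReal := by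
  classical
  obtain ⟨m, rfl⟩ : ∃ m : Fin n, k = m + 1 := ⟨⟨k - 1, by omega⟩, by simp; omega⟩
  let U (σ : Equiv.Perm (Fin n)) : Finset (Fin n) := {i | m ≤ σ.symm i}
  have hU {σ ω} (hω : ω ∈ sortedEvent T σ) : ({i | T (σ m) ω ≤ T i ω} : Finset _) = U σ ∧
      ({i | T (σ m) ω < T i ω} : Finset _) = (U σ).erase (σ m) := by
    refine ⟨by simp only [le_iff_le_of_mem_sortedEvent hω, U], ?_⟩
    ext i
    rw [mem_filter_univ, lt_iff_lt_of_mem_sortedEvent hω, mem_erase, mem_filter_univ,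
      lt_iff_le_and_ne, ne_comm, Ne, Equiv.symm_apply_eq, and_comm]
  have hsys : μ.real {ω | sysLifeOn T univ φ ω = orderStat T univ (m + 1) ω} =
      ∑ σ, if φ (U σ) = 1 ∧ φ ((U σ).erase (σ m)) = 0 then μ.real (sortedEvent T σ) else 0 :=
    measureReal_eq_sum_sortedEvent μ hTmeas hties _ fun σ ω hω => by
      rw [Set.mem_ofPred_eq, orderStat_univ_of_mem_sortedEvent hω,
        sysLifeOn_univ_eq_iff hφ01 hφmono hφempty hφfull, (hU hω).1, (hU hω).2]
  have hmin (A : Finset (Fin n)) :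
      signedDom φ A * μ.real {ω | orderStat T univ (m + 1) ω = minOnLife T A ω} =
        ∑ σ, if σ m ∈ A ∧ A ⊆ U σ then signedDom φ A * μ.real (sortedEvent T σ) else 0 := by
    rcases A.eq_empty_or_nonempty with rfl | hA
    -- `minOnLife T ∅` is the junk value `0`, but the weight `signedDom φ ∅ = φ ∅` vanishes
    · simp [signedDom_empty, hφempty]
    rw [measureReal_eq_sum_sortedEvent μ hTmeas hties (fun σ => σ m ∈ A ∧ A ⊆ U σ)
      fun σ ω hω => ?_, mul_sum]
    · simp only [mul_ite, mul_zero]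
    rw [Set.mem_ofPred_eq, orderStat_univ_of_mem_sortedEvent hω,
      eq_minOnLife_iff (injective_of_mem_sortedEvent hω) hA, ← (hU hω).1]
    simp [subset_iff]
  simp only [← measureReal_def]
  rw [hsys, sum_congr rfl fun A _ => hmin A, sum_comm]
  refine sum_congr rfl fun σ _ => ?_
  rw [← sum_filter, ← sum_mul, sum_signedDom_of_mem_of_subset,
    sub_eq_ite_of_subset hφ01 hφmono (erase_subset _ _), ite_mul, one_mul, zero_mul]

theorem stmt_6 {Ω : Type*} [MeasurableSpace Ω] (μ : Measure Ω) [IsProbabilityMeasure μ]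
    {n : ℕ} (T : Fin n → Ω → ℝ) (hTmeas : ∀ i, Measurable (T i))
    (hTnonneg : ∀ i ω, 0 ≤ T i ω)
    (hties : ∀ i j : Fin n, i ≠ j → μ {ω | T i ω = T j ω} = 0)
    (φ : Finset (Fin n) → ℝ)
    (hφ01 : ∀ A, φ A = 0 ∨ φ A = 1)
    (hφmono : ∀ A B : Finset (Fin n), A ⊆ B → φ A ≤ φ B)
    (hφempty : φ ∅ = 0) (hφfull : φ Finset.univ = 1)
    (k : ℕ) (hk1 : 1 ≤ k) (hkn : k ≤ n) :
    (μ {ω | sysLifeOn T Finset.univ φ ω = orderStat T Finset.univ k ω}).toReal =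
      ∑ A ∈ (Finset.univ : Finset (Fin n)).powerset,
        signedDom φ A * (μ {ω | orderStat T Finset.univ k ω = minOnLife T A ω}).toReal :=
  stmt_6_general μ T hTmeas hties φ hφ01 hφmono hφempty hφfull k hk1 hkn
end
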